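/- arXiv:math/0610830 — 2 statements merged into one kernel-verified Lean document; each statement's English description precedes it below -/
import Mathlib

section
/- Let u : A → B be a homomorphism of rings of prime characteristic p > 0. Then the map Spec(w_{B/A}) : Spec(B^{(p)}) → Spec(A^{(p)} ⊗_A B) induced by w_{B/A} on prime spectra is a bijection. -/
open TensorProduct CategoryTheory CategoryTheory.Limits

universe u

section Dimensions

variable (R : Type u) [CommRing R] (M : Type u) [AddCommGroup M] [Module R M]

/-- `M` has injective dimension at most `n` over `R`: there is an injective resolution
vanishing in degrees `> n`. -/
def InjDimLE (n : ℕ) : Prop :=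
  ∃ I : InjectiveResolution (ModuleCat.of R M), ∀ i, n < i → IsZero (I.cocomplex.X i)

/-- `M` has flat dimension at most `n` over `R`: all `Tor_i(M, N)` vanish for `i > n`. -/
def FlatDimLE (n : ℕ) : Prop :=
  ∀ (N : ModuleCat.{u} R) (i : ℕ), n < i →
    IsZero (((Tor (ModuleCat.{u} R) i).obj (ModuleCat.of R M)).obj N)

/-- The injective dimension of `M` over `R`, as an extended natural number. -/
noncomputable def injDim : ℕ∞ := sInf {e : ℕ∞ | ∃ n : ℕ, e = n ∧ InjDimLE R M n}

/-- The flat dimension of `M` over `R`, as an extended natural number. -/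
noncomputable def flatDim : ℕ∞ := sInf {e : ℕ∞ | ∃ n : ℕ, e = n ∧ FlatDimLE R M n}

/-- `M` has finite injective dimension over `R`. -/
def HasFiniteInjDim : Prop := ∃ n, InjDimLE R M n

/-- `M` has finite flat dimension over `R`. -/
def HasFiniteFlatDim : Prop := ∃ n, FlatDimLE R M n

end Dimensions

section RingHomDims

variable {R S : Type u} [CommRing R] [CommRing S]

/-- A ring homomorphism `f : R →+* S` has finite injective dimension if `S`, viewed as an
`R`-module via `f`, has finite injective dimension. -/
def RingHom.FiniteInjDim (f : R →+* S) : Prop :=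
  letI := f.toAlgebra; HasFiniteInjDim R S

/-- A ring homomorphism `f : R →+* S` has finite flat dimension if `S`, viewed as an
`R`-module via `f`, has finite flat dimension. -/
def RingHom.FiniteFlatDim (f : R →+* S) : Prop :=
  letI := f.toAlgebra; HasFiniteFlatDim R S

/-- The injective dimension of a ring homomorphism `f : R →+* S`, i.e. of `S` as an
`R`-module via `f`. -/
noncomputable def RingHom.injDim (f : R →+* S) : ℕ∞ :=
  letI := f.toAlgebra; _root_.injDim R S

/-- The flat dimension of a ring homomorphism `f : R →+* S`, i.e. of `S` as an
`R`-module via `f`. -/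
noncomputable def RingHom.flatDim (f : R →+* S) : ℕ∞ :=
  letI := f.toAlgebra; _root_.flatDim R S

/-- A ring homomorphism is flat if its target is flat as a module over the source. -/
def RingHom.IsFlat (f : R →+* S) : Prop :=
  letI := f.toAlgebra; Module.Flat R S

/-- A ring homomorphism is faithfully flat if its target is a faithfully flat module
over the source. -/
def RingHom.IsFaithfullyFlat (f : R →+* S) : Prop :=
  letI := f.toAlgebra; Module.FaithfullyFlat R S

end RingHomDims

section Regular

/-- A (noetherian) local ring is regular if its maximal ideal is generated by
`dim R` elements. -/
def IsRegularLocalRing' (R : Type u) [CommRing R] [IsLocalRing R] : Prop :=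
  IsNoetherianRing R ∧ ∃ s : Finset R,
    Ideal.span (s : Set R) = IsLocalRing.maximalIdeal R ∧ (s.card : WithBot ℕ∞) = ringKrullDim R

/-- A ring is regular if it is noetherian and all its localizations at primes are
regular local rings. -/
def IsRegularRing' (R : Type u) [CommRing R] : Prop :=
  IsNoetherianRing R ∧ ∀ (q : Ideal R) [q.IsPrime], IsRegularLocalRing' (Localization.AtPrime q)

/-- A local ring is Gorenstein if it is noetherian, local, and has finite injective
dimension as a module over itself. -/
def IsGorensteinLocalRing (R : Type u) [CommRing R] : Prop :=
  IsLocalRing R ∧ IsNoetherianRing R ∧ HasFiniteInjDim R R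

/-- A ring is Gorenstein if it is noetherian and all its localizations at primes are
Gorenstein local rings. -/
def IsGorensteinRing (R : Type u) [CommRing R] : Prop :=
  IsNoetherianRing R ∧ ∀ (q : Ideal R) [q.IsPrime], IsGorensteinLocalRing (Localization.AtPrime q)

/-- The residue field of a prime ideal `q`, i.e. the residue field of the localization at `q`. -/
noncomputable abbrev residueFieldAt {A : Type u} [CommRing A] (q : Ideal A) [q.IsPrime] : Type u :=
  IsLocalRing.ResidueField (Localization.AtPrime q)

/-- A ring homomorphism `u : A →+* B` is regular if it is flat and all its fibers are
geometrically regular: for every prime `q` of `A` and every finite field extension `L` of the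
residue field `κ(q)`, the ring `L ⊗_{κ(q)} (κ(q) ⊗_A B)` is regular. -/
def RingHom.IsRegularMorphism {A B : Type u} [CommRing A] [CommRing B] (u : A →+* B) : Prop :=
  letI := u.toAlgebra
  Module.Flat A B ∧
    ∀ (q : Ideal A) [q.IsPrime] (L : Type u) [Field L] [Algebra (residueFieldAt q) L],
      FiniteDimensional (residueFieldAt q) L →
      IsRegularRing' (L ⊗[residueFieldAt q] ((residueFieldAt q) ⊗[A] B))

end Regular

section Frob

/-- `FrobAlg p A` is `A` viewed as an `A`-algebra via the Frobenius `x ↦ x ^ p`;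
this is the ring denoted `A^{(p)}`. -/
def FrobAlg (p : ℕ) (A : Type u) : Type u := A

instance (p : ℕ) (A : Type u) [CommRing A] : CommRing (FrobAlg p A) := ‹CommRing A›

/-- The `A`-algebra structure on `A^{(p)}` given by the Frobenius. -/
instance (p : ℕ) (A : Type u) [CommRing A] [Fact p.Prime] [CharP A p] :
    Algebra A (FrobAlg p A) := (frobenius A p).toAlgebra

/-- The `A`-algebra structure on `B^{(p)}` given by the Frobenius composed with `A → B`. -/
instance (priority := 50) (p : ℕ) (A B : Type u) [CommRing A] [CommRing B] [Algebra A B]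
    [Fact p.Prime] [CharP B p] : Algebra A (FrobAlg p B) :=
  ((frobenius B p).comp (algebraMap A B)).toAlgebra

/-- The map `w_{B/A} : A^{(p)} ⊗[A] B →ₐ[A] B^{(p)}`, `a ⊗ b ↦ a b^p`, as an algebra map. -/
noncomputable def wAlgHom (p : ℕ) [Fact p.Prime] (A B : Type u) [CommRing A] [CommRing B]
    [Algebra A B] [CharP A p] [CharP B p] :
    (FrobAlg p A ⊗[A] B) →ₐ[A] FrobAlg p B :=
  Algebra.TensorProduct.lift
    { toRingHom := (algebraMap A B : A →+* B)
      commutes' := fun a =>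
        show algebraMap A B (frobenius A p a) = frobenius B p (algebraMap A B a) from
          (algebraMap A B).map_frobenius p a }
    { toRingHom := (frobenius B p : B →+* B)
      commutes' := fun _ => rfl }
    (fun _ _ => Commute.all _ _)

/-- The map `w_{B/A} : A^{(p)} ⊗[A] B →+* B^{(p)}`, `a ⊗ b ↦ a b^p`. -/
noncomputable def wRingHom (p : ℕ) [Fact p.Prime] (A B : Type u) [CommRing A] [CommRing B]
    [Algebra A B] [CharP A p] [CharP B p] :
    (FrobAlg p A ⊗[A] B) →+* FrobAlg p B :=
  (wAlgHom p A B).toRingHom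

/-- A noetherian local ring `A` of characteristic `p` is quasi-basic if the `A`-algebra
`A^{(p)}` is the directed union of a family of module-finite `A`-subalgebras over each
of which `A^{(p)}` is flat. -/
def IsQuasiBasic (p : ℕ) [Fact p.Prime] (A : Type u) [CommRing A] [CharP A p] : Prop :=
  ∃ (ι : Type u) (_ : Nonempty ι) (D : ι → Subalgebra A (FrobAlg p A)),
    Directed (· ≤ ·) D ∧ (⨆ i, D i) = ⊤ ∧
    (∀ i, Module.Finite A (D i)) ∧ (∀ i, Module.Flat (D i) (FrobAlg p A))

end Frob

section LocalInvts

/-- The embedding dimension of a local ring: the dimension of `m/m²` over the residue field. -/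
noncomputable def embDim (S : Type u) [CommRing S] [IsLocalRing S] : ℕ :=
  Module.finrank (IsLocalRing.ResidueField S) (IsLocalRing.CotangentSpace S)

/-- The depth of a local ring: the supremum of lengths of regular sequences contained in the
maximal ideal. -/
noncomputable def ringDepth (R : Type u) [CommRing R] [IsLocalRing R] : ℕ∞ :=
  sSup {e : ℕ∞ | ∃ rs : List R, e = rs.length ∧
    (∀ r ∈ rs, r ∈ IsLocalRing.maximalIdeal R) ∧ RingTheory.Sequence.IsRegular R rs}

end LocalInvts


theorem comap_frobenius_eq_id (p : ℕ) [Fact p.Prime] (R : Type u) [CommRing R] [CharP R p] :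
    (PrimeSpectrum.comap (frobenius R p)) = id := by
  funext q
  ext x
  show frobenius R p x ∈ q.asIdeal ↔ x ∈ q.asIdeal
  simp only [frobenius_def]
  exact q.isPrime.pow_mem_iff_mem p (Fact.out : p.Prime).pos

/-- The map induced by `w_{B/A}` on prime spectra is a bijection. -/
theorem bijective_comap_w
    (p : ℕ) [Fact p.Prime] (A B : Type u) [CommRing A] [CommRing B]
    [Algebra A B] [CharP A p] [CharP B p] :
    Function.Bijective (PrimeSpectrum.comap (wRingHom p A B)) := by
  haveI : Nontrivial B := CharP.nontrivial_of_char_ne_one (Fact.out : p.Prime).ne_one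
  set T := FrobAlg p A ⊗[A] B with hT
  set w := wRingHom p A B with hw
  set g : FrobAlg p B →+* T :=
    (Algebra.TensorProduct.includeRight : B →ₐ[A] FrobAlg p A ⊗[A] B).toRingHom with hg
  haveI : CharP T p := by
    constructor
    intro n
    rw [← CharP.cast_eq_zero_iff B p n]
    constructor
    · intro h
      have := congrArg w h
      simp at this
      exact this
    · intro h
      have hA : ((n : ℕ) : A) = 0 :=
        (CharP.cast_eq_zero_iff A p n).mpr ((CharP.cast_eq_zero_iff B p n).mp h)
      rw [show ((n : T)) = algebraMap A T ((n : ℕ) : A) from (map_natCast (algebraMap A T) n).symm,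
        hA, map_zero]
  haveI : CharP (FrobAlg p B) p := ‹CharP B p›
  haveI : CharP (FrobAlg p A) p := ‹CharP A p›
  have hwg : w.comp g = frobenius (FrobAlg p B) p := by
    ext b
    show wAlgHom p A B ((1 : FrobAlg p A) ⊗ₜ[A] b) = frobenius B p b
    show algebraMap A B (1 : A) * frobenius B p b = frobenius B p b
    rw [map_one, one_mul]
  have hgw : ∀ x : T, g (w x) = frobenius T p x := by
    intro x
    induction x using TensorProduct.induction_on with
    | zero => simp
    | tmul a b =>
      show g (w (a ⊗ₜ[A] b)) = (a ⊗ₜ[A] b) ^ p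
      have h1 : w (a ⊗ₜ[A] b) = algebraMap A B a * b ^ p := by
        show wAlgHom p A B (a ⊗ₜ[A] b) = algebraMap A B a * b ^ p
        rw [wAlgHom, Algebra.TensorProduct.lift_tmul]
        rfl
      rw [h1]
      erw [map_mul]
      have h2 : g (algebraMap A B a) = ((frobenius A p a : FrobAlg p A) ⊗ₜ[A] (1 : B) : T) := by
        show (1 : FrobAlg p A) ⊗ₜ[A] (algebraMap A B a) = _
        rw [show algebraMap A B a = (show A from a) • (1 : B) from by rw [Algebra.smul_def, mul_one],
          TensorProduct.tmul_smul, TensorProduct.smul_tmul',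
          show (show A from a) • (1 : FrobAlg p A) = frobenius A p a from by
            rw [Algebra.smul_def, mul_one]; rfl]
      have h3 : g (b ^ p) = (1 : FrobAlg p A) ⊗ₜ[A] (b ^ p) := rfl
      rw [h2, h3]
      erw [Algebra.TensorProduct.tmul_mul_tmul, one_mul, mul_one,
        Algebra.TensorProduct.tmul_pow, frobenius_def]
      rfl
    | add x y hx hy =>
      rw [map_add, map_add, hx, hy, map_add]
  have hcomp1 : (PrimeSpectrum.comap g) ∘ (PrimeSpectrum.comap w) = id := by
    rw [show (PrimeSpectrum.comap g) ∘ (PrimeSpectrum.comap w)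
        = (PrimeSpectrum.comap (w.comp g)) from (by rw [PrimeSpectrum.comap_comp]),
      hwg, comap_frobenius_eq_id]
  have hcomp2 : (PrimeSpectrum.comap w) ∘ (PrimeSpectrum.comap g) = id := by
    rw [show (PrimeSpectrum.comap w) ∘ (PrimeSpectrum.comap g)
        = (PrimeSpectrum.comap (g.comp w)) from (by rw [PrimeSpectrum.comap_comp]),
      show g.comp w = frobenius T p from RingHom.ext hgw, comap_frobenius_eq_id]
  exact ⟨Function.LeftInverse.injective (congrFun hcomp1),
    Function.RightInverse.surjective (congrFun hcomp2)⟩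
end

section
/- Let u : A → B be a homomorphism of rings of prime characteristic p > 0 such that B is noetherian. If the homomorphism w_{B/A} : A^{(p)} ⊗_A B → B^{(p)} is flat, then the ring A^{(p)} ⊗_A B is noetherian. -/
open TensorProduct CategoryTheory CategoryTheory.Limits

universe u

section Aux

variable (p : ℕ) [Fact p.Prime] (A B : Type u) [CommRing A] [CommRing B]
  [Algebra A B] [CharP A p] [CharP B p]

/-- The map `B^{(p)} → A^{(p)} ⊗[A] B`, `b ↦ 1 ⊗ b`. -/
noncomputable def vRingHom : FrobAlg p B →+* (FrobAlg p A ⊗[A] B) :=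
  (Algebra.TensorProduct.includeRight : B →ₐ[A] (FrobAlg p A ⊗[A] B)).toRingHom

lemma wRingHom_tmul (a : A) (b : B) :
    wRingHom p A B (a ⊗ₜ[A] b) = algebraMap A B a * b ^ p := by
  show wAlgHom p A B (a ⊗ₜ[A] b) = _
  rfl

/-- The composite `v ∘ w` is the Frobenius of `A^{(p)} ⊗[A] B`. -/
lemma v_comp_w_eq_pow [CharP (FrobAlg p A ⊗[A] B) p] (x : FrobAlg p A ⊗[A] B) :
    vRingHom p A B (wRingHom p A B x) = x ^ p := by
  induction x using TensorProduct.induction_on with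
  | zero => rw [map_zero, map_zero, zero_pow (Fact.out : p.Prime).ne_zero]
  | tmul a b =>
      rw [wRingHom_tmul p A B a b]
      refine (map_mul (vRingHom p A B) (algebraMap A B a) (b ^ p)).trans ?_
      have h1 : vRingHom p A B (algebraMap A B a) = 1 ⊗ₜ[A] (algebraMap A B a) := rfl
      have h2 : vRingHom p A B (b ^ p) = 1 ⊗ₜ[A] (b ^ p) := rfl
      refine (congrArg₂ (· * ·) h1 h2).trans ?_
      rw [Algebra.TensorProduct.tmul_mul_tmul, one_mul]
      have h3 : (algebraMap A B a) * b ^ p = (show A from a) • (b ^ p : B) :=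
        (Algebra.smul_def _ _).symm
      rw [h3, ← TensorProduct.smul_tmul]
      have h4 : (show A from a) • (1 : FrobAlg p A) = a ^ p := by
        rw [Algebra.smul_def, mul_one]
        rfl
      rw [h4, Algebra.TensorProduct.tmul_pow]
  | add x y hx hy =>
      haveI : ExpChar (FrobAlg p A ⊗[A] B) p := ExpChar.prime Fact.out
      rw [map_add, map_add, hx, hy, add_pow_char]

/-- If an ideal of `A^{(p)} ⊗[A] B` extends to the unit ideal of `B^{(p)}` along `w`,
it is the unit ideal. -/
lemma ideal_eq_top_of_map_w_eq_top [CharP (FrobAlg p A ⊗[A] B) p]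
    (I : Ideal (FrobAlg p A ⊗[A] B)) (h : I.map (wRingHom p A B) = ⊤) : I = ⊤ := by
  have h1 : (I.map (wRingHom p A B)).map (vRingHom p A B) = ⊤ := by
    rw [h, Ideal.map_top]
  rw [Ideal.map_map] at h1
  have h2 : I.map ((vRingHom p A B).comp (wRingHom p A B)) ≤ I := by
    rw [Ideal.map_le_iff_le_comap]
    intro x hx
    simp only [Ideal.mem_comap, RingHom.coe_comp, Function.comp_apply]
    rw [v_comp_w_eq_pow]
    exact Ideal.pow_mem_of_mem I hx p (Fact.out : p.Prime).pos
  exact top_le_iff.mp (h1 ▸ h2)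

end Aux

/-- If `B` is noetherian and `w_{B/A}` is flat, then `A^{(p)} ⊗[A] B` is noetherian. -/
theorem isNoetherianRing_of_flat_w
    (p : ℕ) [Fact p.Prime] (A B : Type u) [CommRing A] [CommRing B]
    [Algebra A B] [CharP A p] [CharP B p] [IsNoetherianRing B]
    (hflat : (wRingHom p A B).IsFlat) :
    IsNoetherianRing (FrobAlg p A ⊗[A] B) := by
  rcases subsingleton_or_nontrivial (FrobAlg p A ⊗[A] B) with hsub | hnt
  · exact inferInstance
  · haveI : CharP (FrobAlg p A ⊗[A] B) p := by
      refine (CharP.charP_iff_prime_eq_zero (Fact.out : p.Prime)).2 ?_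
      rw [← map_natCast (algebraMap A (FrobAlg p A ⊗[A] B)) p, CharP.cast_eq_zero, map_zero]
    letI : Algebra (FrobAlg p A ⊗[A] B) (FrobAlg p B) := (wRingHom p A B).toAlgebra
    haveI hfl : Module.Flat (FrobAlg p A ⊗[A] B) (FrobAlg p B) := hflat
    haveI hff : Module.FaithfullyFlat (FrobAlg p A ⊗[A] B) (FrobAlg p B) := by
      refine ⟨fun m hm htop => hm.ne_top (ideal_eq_top_of_map_w_eq_top p A B m ?_)⟩
      have halg : algebraMap (FrobAlg p A ⊗[A] B) (FrobAlg p B) = wRingHom p A B := rfl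
      rw [Ideal.smul_top_eq_map, halg] at htop
      exact Submodule.restrictScalars_injective (FrobAlg p A ⊗[A] B) _ _
        (by rw [Submodule.restrictScalars_top]; exact htop)
    -- contraction: comap of extension recovers the ideal
    have contract : ∀ (I : Ideal (FrobAlg p A ⊗[A] B)) (x : FrobAlg p A ⊗[A] B),
        wRingHom p A B x ∈ I.map (wRingHom p A B) → x ∈ I := by
      intro I x hx
      let C : Type u := FrobAlg p A ⊗[A] B
      let B' : Type u := FrobAlg p B
      let f : C →ₗ[C] C ⧸ I := LinearMap.toSpanSingleton C (C ⧸ I) (Ideal.Quotient.mk I x)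
      have hf : f = 0 := by
        rw [Module.FaithfullyFlat.zero_iff_lTensor_zero C B' f]
        apply TensorProduct.ext'
        intro b c
        rw [LinearMap.zero_apply, LinearMap.lTensor_tmul]
        have hfc : f c = Ideal.Quotient.mk I (c * x) := by
          show c • Ideal.Quotient.mk I x = Ideal.Quotient.mk I (c * x)
          exact (Submodule.Quotient.mk_smul I c x).symm
        rw [hfc,
          ← LinearEquiv.map_eq_zero_iff (TensorProduct.tensorQuotEquivQuotSMul B' I),
          TensorProduct.tensorQuotEquivQuotSMul, LinearEquiv.trans_apply,
          TensorProduct.comm_tmul, TensorProduct.quotTensorEquivQuotSMul_mk_tmul,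
          Submodule.Quotient.mk_eq_zero, Ideal.smul_top_eq_map]
        have hsm : (c * x) • b = wRingHom p A B (c * x) * b := Algebra.smul_def _ _
        rw [hsm]
        refine (Submodule.restrictScalars_mem _ _ _).mpr ?_
        rw [map_mul]
        exact Ideal.mul_mem_right b _ (Ideal.mul_mem_left _ _ hx)
      have hx0 : Ideal.Quotient.mk I x = 0 := by
        have h1 := congrArg (fun g : C →ₗ[C] C ⧸ I => g 1) hf
        simp only [LinearMap.zero_apply] at h1
        rw [← one_smul C (Ideal.Quotient.mk I x)]
        exact h1
      exact (Ideal.Quotient.eq_zero_iff_mem).mp hx0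
    -- transfer well-foundedness along the strictly monotone map `I ↦ I.map w`
    rw [isNoetherianRing_iff, isNoetherian_iff]
    have wfB : WellFounded ((· > ·) : Ideal (FrobAlg p B) → Ideal (FrobAlg p B) → Prop) :=
      (isNoetherian_iff.mp (inferInstanceAs (IsNoetherianRing B)))
    have hmono : ∀ {I J : Ideal (FrobAlg p A ⊗[A] B)}, I < J →
        I.map (wRingHom p A B) < J.map (wRingHom p A B) := by
      intro I J hIJ
      refine lt_of_le_of_ne (Ideal.map_mono hIJ.le) (fun heq => ?_)
      obtain ⟨x, hxJ, hxI⟩ := Set.exists_of_ssubset hIJ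
      exact hxI (contract I x (heq ▸ Ideal.mem_map_of_mem _ hxJ))
    exact Subrelation.wf (fun h => hmono h)
      (InvImage.wf (fun I : Ideal (FrobAlg p A ⊗[A] B) => I.map (wRingHom p A B)) wfB)
end
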